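/- (Theorem 1, closed loop.) Suppose ℓ ≥ 0 and V_f ≥ 0 everywhere, the terminal conditions hold (𝕏_f ⊆ 𝕏, and for every y ∈ 𝕏_f there exists w ∈ 𝕌 with f(y,w) ∈ 𝕏_f and V_f(f(y,w)) ≤ V_f(y) − ℓ(y,w)), 0 ≤ a < 1, 1 ≤ M ≤ N, and there is a K-function α₁ such that ℓ(y,w) ≥ α₁(‖y‖) for all y ∈ 𝕏 and w ∈ 𝕌. Let x : ℕ → ℝⁿ be a closed-loop trajectory: for each k there is an optimal pair (v*_k, z*_k) for P_N(x(k)) and an input sequence u_k that is (a,M)-admissible at x(k) relative to (v*_k, z*_k), with x(k+1) = f(x(k), u_k(0)). Then: (i) x(k) ∈ 𝕏 and u_k(0) ∈ 𝕌 for all k ∈ ℕ; (ii) the sequence k ↦ V_N*(x(k)) is nonincreasing and satisfies V_N*(x(k+1)) ≤ V_N*(x(k)) − (1−a)·α₁(‖x(k)‖); and (iii) x(k) → 0 as k → ∞. -/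

import Mathlib

/-!
The value function `V_N*` is a Lyapunov function for the closed loop. From `x(k+1) = f(x(k), u_k(0))`
apply the rest of `u_k`, which meets the optimal trajectory `z*_k` at time `M`; then follow `v*_k` up
to time `N` and append the terminal control available at `z*_k(N) ∈ 𝕏_f`. This input sequence is
`N`-feasible from `x(k+1)`, and the admissibility bound together with the terminal decrease shows
that its cost is at most `V_N*(x(k)) - (1 - a) ℓ(x(k), u_k(0))`. As `V_N* ≥ 0`, the decrements
`(1 - a) α₁(‖x(k)‖)` are summable, hence tend to `0`, and strict monotonicity of `α₁` gives `x(k) → 0`.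
-/

section Framework

variable {S I : Type*}

/-- The trajectory generated by dynamics `f` from initial state `x` under input sequence `v`. -/
def traj (f : S → I → S) (x : S) (v : ℕ → I) : ℕ → S
  | 0 => x
  | k + 1 => f (traj f x v k) (v k)

/-- `v` is an `N`-feasible input sequence from `x`. -/
def Feasible (f : S → I → S) (X : Set S) (U : Set I) (Xf : Set S)
    (N : ℕ) (x : S) (v : ℕ → I) : Prop :=
  (∀ i < N, traj f x v i ∈ X ∧ v i ∈ U) ∧ traj f x v N ∈ Xf

/-- The MPC cost `V_N(x, v)`. -/
noncomputable def mpcCost (f : S → I → S) (l : S → I → ℝ) (Vf : S → ℝ)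
    (N : ℕ) (x : S) (v : ℕ → I) : ℝ :=
  (∑ i ∈ Finset.range N, l (traj f x v i) (v i)) + Vf (traj f x v N)

/-- `(v, z)` is an optimal pair for the problem `P_N(x)`. -/
def OptPair (f : S → I → S) (X : Set S) (U : Set I) (Xf : Set S)
    (l : S → I → ℝ) (Vf : S → ℝ) (N : ℕ) (x : S) (v : ℕ → I) (z : ℕ → S) : Prop :=
  Feasible f X U Xf N x v ∧ (∀ i, z i = traj f x v i) ∧
    ∀ w, Feasible f X U Xf N x w → mpcCost f l Vf N x v ≤ mpcCost f l Vf N x w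

/-- `u` is an `(a, M)`-admissible input sequence at `x`, relative to the optimal pair `(v, z)`. -/
def Adm (f : S → I → S) (X : Set S) (U : Set I) (l : S → I → ℝ)
    (a : ℝ) (M : ℕ) (x : S) (v : ℕ → I) (z : ℕ → S) (u : ℕ → I) : Prop :=
  (∀ i < M, traj f x u i ∈ X ∧ u i ∈ U) ∧
  ((∑ i ∈ Finset.range M, l (traj f x u i) (u i))
      - ∑ i ∈ Finset.range M, l (z i) (v i)) ≤ a * l x (u 0) ∧
  traj f x u M = z M

/-- The safety–stability set `𝕊(x)`. -/
def S2Set (f : S → I → S) (X : Set S) (U : Set I) (l : S → I → ℝ)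
    (a : ℝ) (M : ℕ) (x : S) (v : ℕ → I) (z : ℕ → S) : Set I :=
  {w | ∃ u, Adm f X U l a M x v z u ∧ u 0 = w}

/-- The value function `V_N^*`. -/
noncomputable def VStar (f : S → I → S) (X : Set S) (U : Set I) (Xf : Set S)
    (l : S → I → ℝ) (Vf : S → ℝ) (N : ℕ) (y : S) : ℝ :=
  sInf (mpcCost f l Vf N y '' {v | Feasible f X U Xf N y v})

/-- A K-function: continuous, strictly increasing on `[0, ∞)`, vanishing at `0`. -/
def IsKFun (α : ℝ → ℝ) : Prop :=
  Continuous α ∧ StrictMonoOn α (Set.Ici 0) ∧ α 0 = 0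

end Framework

open Filter Topology Finset

section Trajectories

variable {S I : Type*} (f : S → I → S)

theorem traj_succ_eq_traj_tail (x : S) (s : ℕ → I) (i : ℕ) :
    traj f x s (i + 1) = traj f (f x (s 0)) (fun j => s (j + 1)) i := by
  induction i with
  | zero => rfl
  | succ i ih => rw [traj, ih]; rfl

theorem traj_eq_of_eq_of_inputs_eq {x y : S} {u v : ℕ → I} {k n : ℕ}
    (hk : traj f x u k = traj f y v k) (huv : ∀ i, k ≤ i → i < n → u i = v i) (hkn : k ≤ n) :
    traj f x u n = traj f y v n := by
  induction n, hkn using Nat.le_induction with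
  | base => exact hk
  | succ n hkn ih =>
    rw [traj, traj, ih fun i hki hin => huv i hki (by omega), huv n hkn (by omega)]

theorem traj_eq_of_inputs_eq {x : S} {u v : ℕ → I} {n : ℕ} (huv : ∀ i < n, u i = v i) :
    traj f x u n = traj f x v n :=
  traj_eq_of_eq_of_inputs_eq f rfl (fun i _ hi => huv i hi) n.zero_le

end Trajectories

def splice {I : Type*} (M : ℕ) (u v : ℕ → I) : ℕ → I :=
  fun i => if i < M then u i else v i

section Splice

theorem splice_apply_of_lt {I : Type*} {M i : ℕ} {u v : ℕ → I} (hi : i < M) :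
    splice M u v i = u i :=
  if_pos hi

theorem splice_apply_of_ge {I : Type*} {M i : ℕ} {u v : ℕ → I} (hi : M ≤ i) :
    splice M u v i = v i :=
  if_neg (not_lt.mpr hi)

variable {S I : Type*} (f : S → I → S) {M : ℕ} {x : S} {u v : ℕ → I}

theorem traj_splice_of_le {i : ℕ} (hi : i ≤ M) : traj f x (splice M u v) i = traj f x u i :=
  traj_eq_of_inputs_eq f fun _ hj => splice_apply_of_lt (by omega)

theorem traj_splice_of_ge (hM : traj f x u M = traj f x v M) {i : ℕ} (hi : M ≤ i) :
    traj f x (splice M u v) i = traj f x v i :=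
  traj_eq_of_eq_of_inputs_eq f ((traj_splice_of_le f le_rfl).trans hM)
    (fun _ hj _ => splice_apply_of_ge hj) hi

end Splice

section Feasibility

variable {S I : Type*} {f : S → I → S} {X : Set S} {U : Set I} {Xf : Set S}

theorem Feasible.tail {N : ℕ} {x : S} {s : ℕ → I} (hs : Feasible f X U Xf (N + 1) x s) :
    Feasible f X U Xf N (f x (s 0)) (fun i => s (i + 1)) := by
  refine ⟨fun i hi => ?_, ?_⟩ <;> rw [← traj_succ_eq_traj_tail]
  · exact hs.1 (i + 1) (by omega)
  · exact hs.2

theorem Feasible.splice {K M : ℕ} (hMK : M ≤ K) {x : S} {u v : ℕ → I}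
    (hu : ∀ i < M, traj f x u i ∈ X ∧ u i ∈ U) (hM : traj f x u M = traj f x v M)
    (hv : Feasible f X U Xf K x v) : Feasible f X U Xf K x (splice M u v) := by
  refine ⟨fun i hi => ?_, ?_⟩
  · by_cases hiM : i < M
    · rw [traj_splice_of_le f hiM.le, splice_apply_of_lt hiM]
      exact hu i hiM
    · rw [traj_splice_of_ge f hM (not_lt.mp hiM), splice_apply_of_ge (not_lt.mp hiM)]
      exact hv.1 i hi
  · rw [traj_splice_of_ge f hM hMK]
    exact hv.2

end Feasibility

section Cost

variable {S I : Type*} (f : S → I → S) (l : S → I → ℝ) (Vf : S → ℝ)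

theorem mpcCost_tail (N : ℕ) (x : S) (s : ℕ → I) :
    mpcCost f l Vf N (f x (s 0)) (fun i => s (i + 1)) = mpcCost f l Vf (N + 1) x s - l x (s 0) := by
  simp only [mpcCost, sum_range_succ' _ N, ← traj_succ_eq_traj_tail]
  rw [traj]
  ring

theorem mpcCost_splice {K M : ℕ} (hMK : M ≤ K) {x : S} {u v : ℕ → I}
    (hM : traj f x u M = traj f x v M) :
    mpcCost f l Vf K x (splice M u v) = mpcCost f l Vf K x v +
      ((∑ i ∈ range M, l (traj f x u i) (u i)) - ∑ i ∈ range M, l (traj f x v i) (v i)) := by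
  have hprefix : ∑ i ∈ range M, l (traj f x (splice M u v) i) (splice M u v i)
      = ∑ i ∈ range M, l (traj f x u i) (u i) := by
    refine sum_congr rfl fun i hi => ?_
    have hiM := mem_range.mp hi
    rw [traj_splice_of_le f hiM.le, splice_apply_of_lt hiM]
  have hsuffix : ∑ i ∈ Ico M K, l (traj f x (splice M u v) i) (splice M u v i)
      = ∑ i ∈ Ico M K, l (traj f x v i) (v i) := by
    refine sum_congr rfl fun i hi => ?_
    have hMi := (mem_Ico.mp hi).1
    rw [traj_splice_of_ge f hM hMi, splice_apply_of_ge hMi]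
  simp only [mpcCost, ← sum_range_add_sum_Ico _ hMK, hprefix, hsuffix, traj_splice_of_ge f hM hMK]
  ring

variable {X : Set S} {U : Set I} {Xf : Set S}

theorem Feasible.exists_succ_mpcCost_le (hXfX : Xf ⊆ X)
    (hterm : ∀ y ∈ Xf, ∃ w ∈ U, f y w ∈ Xf ∧ Vf (f y w) ≤ Vf y - l y w)
    {N : ℕ} {x : S} {v : ℕ → I} (hv : Feasible f X U Xf N x v) :
    ∃ v', Feasible f X U Xf (N + 1) x v' ∧
      mpcCost f l Vf (N + 1) x v' ≤ mpcCost f l Vf N x v ∧ ∀ i < N, v' i = v i := by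
  obtain ⟨κ, hκU, hκXf, hκVf⟩ := hterm _ hv.2
  set v' := Function.update v N κ
  have hagree : ∀ i < N, v' i = v i := fun i hi => Function.update_of_ne hi.ne _ _
  have htraj : ∀ i ≤ N, traj f x v' i = traj f x v i := fun i hi =>
    traj_eq_of_inputs_eq f fun j hj => hagree j (by omega)
  have hv'N : v' N = κ := Function.update_self ..
  have hend : traj f x v' (N + 1) = f (traj f x v N) κ := by rw [traj, htraj N le_rfl, hv'N]
  refine ⟨v', ⟨fun i hi => ?_, ?_⟩, ?_, hagree⟩
  · rcases Nat.lt_succ_iff_lt_or_eq.mp hi with hi | rfl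
    · rw [htraj i hi.le, hagree i hi]
      exact hv.1 i hi
    · rw [htraj i le_rfl, hv'N]
      exact ⟨hXfX hv.2, hκU⟩
  · rw [hend]
    exact hκXf
  · have hsum : ∑ i ∈ range N, l (traj f x v' i) (v' i) = ∑ i ∈ range N, l (traj f x v i) (v i) :=
      sum_congr rfl fun i hi => by rw [htraj i (mem_range.mp hi).le, hagree i (mem_range.mp hi)]
    simp only [mpcCost, sum_range_succ, hsum, hend, htraj N le_rfl, hv'N]
    linarith

end Cost

section ValueFunction

variable {S I : Type*} {f : S → I → S} {X : Set S} {U : Set I} {Xf : Set S}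
  {l : S → I → ℝ} {Vf : S → ℝ}

theorem mpcCost_nonneg (hl : ∀ y w, 0 ≤ l y w) (hVf : ∀ y, 0 ≤ Vf y)
    (N : ℕ) (x : S) (v : ℕ → I) : 0 ≤ mpcCost f l Vf N x v :=
  add_nonneg (sum_nonneg fun _ _ => hl _ _) (hVf _)

theorem bddBelow_mpcCost_image (hl : ∀ y w, 0 ≤ l y w) (hVf : ∀ y, 0 ≤ Vf y) (N : ℕ) (x : S) :
    BddBelow (mpcCost f l Vf N x '' {v | Feasible f X U Xf N x v}) :=
  ⟨0, by rintro _ ⟨v, -, rfl⟩; exact mpcCost_nonneg hl hVf N x v⟩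

theorem VStar_le_mpcCost (hl : ∀ y w, 0 ≤ l y w) (hVf : ∀ y, 0 ≤ Vf y)
    {N : ℕ} {x : S} {v : ℕ → I} (hv : Feasible f X U Xf N x v) :
    VStar f X U Xf l Vf N x ≤ mpcCost f l Vf N x v :=
  csInf_le (bddBelow_mpcCost_image hl hVf N x) ⟨v, hv, rfl⟩

theorem VStar_nonneg (hl : ∀ y w, 0 ≤ l y w) (hVf : ∀ y, 0 ≤ Vf y)
    {N : ℕ} {x : S} {v : ℕ → I} (hv : Feasible f X U Xf N x v) :
    0 ≤ VStar f X U Xf l Vf N x :=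
  le_csInf ⟨_, v, hv, rfl⟩ (by rintro _ ⟨w, -, rfl⟩; exact mpcCost_nonneg hl hVf N x w)

theorem OptPair.VStar_eq (hl : ∀ y w, 0 ≤ l y w) (hVf : ∀ y, 0 ≤ Vf y)
    {N : ℕ} {x : S} {v : ℕ → I} {z : ℕ → S} (hv : OptPair f X U Xf l Vf N x v z) :
    VStar f X U Xf l Vf N x = mpcCost f l Vf N x v :=
  (VStar_le_mpcCost hl hVf hv.1).antisymm
    (le_csInf ⟨_, v, hv.1, rfl⟩ (by rintro _ ⟨w, hw, rfl⟩; exact hv.2.2 w hw))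

theorem VStar_apply_le_sub (hl : ∀ y w, 0 ≤ l y w) (hVf : ∀ y, 0 ≤ Vf y) (hXfX : Xf ⊆ X)
    (hterm : ∀ y ∈ Xf, ∃ w ∈ U, f y w ∈ Xf ∧ Vf (f y w) ≤ Vf y - l y w)
    {N M : ℕ} {a : ℝ} (hM1 : 1 ≤ M) (hMN : M ≤ N) {x : S} {v u : ℕ → I} {z : ℕ → S}
    (hopt : OptPair f X U Xf l Vf N x v z) (hadm : Adm f X U l a M x v z u) :
    VStar f X U Xf l Vf N (f x (u 0)) ≤ VStar f X U Xf l Vf N x - (1 - a) * l x (u 0) := by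
  obtain ⟨hu, hcost, hjoin⟩ := hadm
  obtain ⟨v', hv', hv'cost, hv'v⟩ := hopt.1.exists_succ_mpcCost_le f l Vf hXfX hterm
  have htraj : ∀ i ≤ N, traj f x v' i = traj f x v i := fun i hi =>
    traj_eq_of_inputs_eq f fun j hj => hv'v j (by omega)
  have hM : traj f x u M = traj f x v' M := by rw [hjoin, hopt.2.1, htraj M hMN]
  have hprefix : ∑ i ∈ range M, l (traj f x v' i) (v' i) = ∑ i ∈ range M, l (z i) (v i) :=
    sum_congr rfl fun i hi => by
      have hiN : i < N := (mem_range.mp hi).trans_le hMN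
      rw [htraj i hiN.le, hv'v i hiN, hopt.2.1]
  have hs0 : splice M u v' 0 = u 0 := splice_apply_of_lt hM1
  have htail : Feasible f X U Xf N (f x (u 0)) (fun i => splice M u v' (i + 1)) :=
    hs0 ▸ (hv'.splice (by omega) hu hM).tail
  calc VStar f X U Xf l Vf N (f x (u 0))
      ≤ mpcCost f l Vf N (f x (splice M u v' 0)) (fun i => splice M u v' (i + 1)) := by
        rw [hs0]
        exact VStar_le_mpcCost hl hVf htail
    _ = mpcCost f l Vf (N + 1) x v' + ((∑ i ∈ range M, l (traj f x u i) (u i))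
          - ∑ i ∈ range M, l (z i) (v i)) - l x (u 0) := by
        rw [mpcCost_tail, mpcCost_splice f l Vf (by omega) hM, hs0, hprefix]
    _ ≤ mpcCost f l Vf N x v + a * l x (u 0) - l x (u 0) := by gcongr
    _ = VStar f X U Xf l Vf N x - (1 - a) * l x (u 0) := by rw [hopt.VStar_eq hl hVf]; ring

end ValueFunction

theorem tendsto_zero_of_succ_le_sub {b c : ℕ → ℝ} (hb : ∀ k, 0 ≤ b k) (hc : ∀ k, 0 ≤ c k)
    (hbc : ∀ k, b (k + 1) ≤ b k - c k) : Tendsto c atTop (𝓝 0) := by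
  refine (summable_of_sum_range_le hc (c := b 0) fun n => ?_).tendsto_atTop_zero
  calc ∑ k ∈ range n, c k ≤ ∑ k ∈ range n, (b k - b (k + 1)) :=
        sum_le_sum fun k _ => by linarith [hbc k]
    _ = b 0 - b n := sum_range_sub' b n
    _ ≤ b 0 := sub_le_self _ (hb n)

namespace IsKFun

variable {α : ℝ → ℝ} (hα : IsKFun α)
include hα

theorem nonneg {r : ℝ} (hr : 0 ≤ r) : 0 ≤ α r :=
  hα.2.2 ▸ hα.2.1.monotoneOn Set.self_mem_Ici hr hr

theorem tendsto_zero_of_tendsto_comp {ι : Type*} {F : Filter ι} {r : ι → ℝ} (hr : ∀ i, 0 ≤ r i)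
    (h : Tendsto (fun i => α (r i)) F (𝓝 0)) : Tendsto r F (𝓝 0) := by
  refine tendsto_order.2 ⟨fun ε hε => Eventually.of_forall fun i => hε.trans_le (hr i),
    fun ε hε => ?_⟩
  have hαε : 0 < α ε := hα.2.2 ▸ hα.2.1 Set.self_mem_Ici hε.le hε
  filter_upwards [h.eventually (gt_mem_nhds hαε)] with i hi
  exact (hα.2.1.lt_iff_lt (hr i) hε.le).1 hi

end IsKFun

theorem closed_loop_safety_and_stability_general {n m : ℕ}
    (f : EuclideanSpace ℝ (Fin n) → EuclideanSpace ℝ (Fin m) → EuclideanSpace ℝ (Fin n))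
    (X : Set (EuclideanSpace ℝ (Fin n))) (U : Set (EuclideanSpace ℝ (Fin m)))
    (Xf : Set (EuclideanSpace ℝ (Fin n)))
    (l : EuclideanSpace ℝ (Fin n) → EuclideanSpace ℝ (Fin m) → ℝ)
    (Vf : EuclideanSpace ℝ (Fin n) → ℝ)
    (N M : ℕ) (a : ℝ) (α₁ : ℝ → ℝ)
    (hl : ∀ y w, 0 ≤ l y w)
    (hVf : ∀ y, 0 ≤ Vf y)
    (hXfX : Xf ⊆ X)
    (hterm : ∀ y ∈ Xf, ∃ w ∈ U, f y w ∈ Xf ∧ Vf (f y w) ≤ Vf y - l y w)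
    (ha1 : a < 1) (hM1 : 1 ≤ M) (hMN : M ≤ N)
    (hα : IsKFun α₁)
    (hαl : ∀ y ∈ X, ∀ w ∈ U, α₁ ‖y‖ ≤ l y w)
    (x : ℕ → EuclideanSpace ℝ (Fin n))
    (u : ℕ → ℕ → EuclideanSpace ℝ (Fin m))
    (vs : ℕ → ℕ → EuclideanSpace ℝ (Fin m))
    (zs : ℕ → ℕ → EuclideanSpace ℝ (Fin n))
    (hloop : ∀ k, OptPair f X U Xf l Vf N (x k) (vs k) (zs k) ∧
      Adm f X U l a M (x k) (vs k) (zs k) (u k) ∧ x (k + 1) = f (x k) (u k 0)) :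
    (∀ k, x k ∈ X ∧ u k 0 ∈ U) ∧
    (∀ k, VStar f X U Xf l Vf N (x (k + 1)) ≤ VStar f X U Xf l Vf N (x k)) ∧
    (∀ k, VStar f X U Xf l Vf N (x (k + 1))
        ≤ VStar f X U Xf l Vf N (x k) - (1 - a) * α₁ ‖x k‖) ∧
    Filter.Tendsto x Filter.atTop (nhds 0) := by
  have hsafe : ∀ k, x k ∈ X ∧ u k 0 ∈ U := fun k => (hloop k).2.1.1 0 hM1
  have hdec : ∀ k, VStar f X U Xf l Vf N (x (k + 1))
      ≤ VStar f X U Xf l Vf N (x k) - (1 - a) * α₁ ‖x k‖ := fun k => by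
    obtain ⟨hopt, hadm, hstep⟩ := hloop k
    have hαk : α₁ ‖x k‖ ≤ l (x k) (u k 0) := hαl _ (hsafe k).1 _ (hsafe k).2
    calc VStar f X U Xf l Vf N (x (k + 1))
        ≤ VStar f X U Xf l Vf N (x k) - (1 - a) * l (x k) (u k 0) :=
          hstep ▸ VStar_apply_le_sub hl hVf hXfX hterm hM1 hMN hopt hadm
      _ ≤ _ := by gcongr
  have hgap : ∀ k, 0 ≤ (1 - a) * α₁ ‖x k‖ := fun k =>
    mul_nonneg (by linarith) (hα.nonneg (norm_nonneg _))
  refine ⟨hsafe, fun k => (hdec k).trans (sub_le_self _ (hgap k)), hdec, ?_⟩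
  have hgap_tendsto := tendsto_zero_of_succ_le_sub
    (fun k => VStar_nonneg hl hVf (hloop k).1.1) hgap hdec
  rw [tendsto_zero_iff_norm_tendsto_zero]
  refine hα.tendsto_zero_of_tendsto_comp (fun k => norm_nonneg _) ?_
  exact (tendsto_const_smul_iff₀ (sub_ne_zero.mpr ha1.ne')).1
    (by simpa only [smul_eq_mul, mul_zero] using hgap_tendsto)

/-- Theorem 1 (closed loop): safety, Lyapunov decrease of the value function, and
convergence of the state to the origin. -/
theorem closed_loop_safety_and_stability {n m : ℕ}
    (f : EuclideanSpace ℝ (Fin n) → EuclideanSpace ℝ (Fin m) → EuclideanSpace ℝ (Fin n))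
    (X : Set (EuclideanSpace ℝ (Fin n))) (U : Set (EuclideanSpace ℝ (Fin m)))
    (Xf : Set (EuclideanSpace ℝ (Fin n)))
    (l : EuclideanSpace ℝ (Fin n) → EuclideanSpace ℝ (Fin m) → ℝ)
    (Vf : EuclideanSpace ℝ (Fin n) → ℝ)
    (N M : ℕ) (a : ℝ) (α₁ : ℝ → ℝ)
    (hl : ∀ y w, 0 ≤ l y w)
    (hVf : ∀ y, 0 ≤ Vf y)
    (hXfX : Xf ⊆ X)
    (hterm : ∀ y ∈ Xf, ∃ w ∈ U, f y w ∈ Xf ∧ Vf (f y w) ≤ Vf y - l y w)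
    (ha0 : 0 ≤ a) (ha1 : a < 1) (hM1 : 1 ≤ M) (hMN : M ≤ N)
    (hα : IsKFun α₁)
    (hαl : ∀ y ∈ X, ∀ w ∈ U, α₁ ‖y‖ ≤ l y w)
    (x : ℕ → EuclideanSpace ℝ (Fin n))
    (u : ℕ → ℕ → EuclideanSpace ℝ (Fin m))
    (vs : ℕ → ℕ → EuclideanSpace ℝ (Fin m))
    (zs : ℕ → ℕ → EuclideanSpace ℝ (Fin n))
    (hloop : ∀ k, OptPair f X U Xf l Vf N (x k) (vs k) (zs k) ∧
      Adm f X U l a M (x k) (vs k) (zs k) (u k) ∧ x (k + 1) = f (x k) (u k 0)) :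
    (∀ k, x k ∈ X ∧ u k 0 ∈ U) ∧
    (∀ k, VStar f X U Xf l Vf N (x (k + 1)) ≤ VStar f X U Xf l Vf N (x k)) ∧
    (∀ k, VStar f X U Xf l Vf N (x (k + 1))
        ≤ VStar f X U Xf l Vf N (x k) - (1 - a) * α₁ ‖x k‖) ∧
    Filter.Tendsto x Filter.atTop (nhds 0) :=
  closed_loop_safety_and_stability_general f X U Xf l Vf N M a α₁ hl hVf hXfX hterm ha1 hM1 hMN hα
    hαl x u vs zs hloop
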